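/- Let J be a monomial ideal of S with minimal monomial generating set G_min(J). Then the radical √J equals the ideal of S generated by the squarefree monomials ∏_{i∈B} x_i, taken over all subsets B ⊆ {1,…,n} such that the ideal generated by {u({1,…,n}∖B) : u ∈ G_min(J)} equals S. (Equivalently, the Stanley–Reisner ideal of the Alexander dual of the eliminating simplicial complex of J equals √J.) -/

import Mathlib

open MvPolynomial

/-- An ideal of `K[x_1, …, x_n]` is a monomial ideal if it is generated by monomials. -/
def IsMonomialIdeal {K : Type*} [Field K] {n : ℕ} (I : Ideal (MvPolynomial (Fin n) K)) : Prop :=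
  ∃ G : Set (Fin n →₀ ℕ),
    I = Ideal.span ((fun a => (monomial a (1 : K) : MvPolynomial (Fin n) K)) '' G)

/-- `G_min(I)`: the exponent vectors of the minimal monomial generators of `I`, i.e. the
monomials `u ∈ I` such that `u / x_j ∉ I` for every variable `x_j` dividing `u`. -/
def minGens {K : Type*} [Field K] {n : ℕ} (I : Ideal (MvPolynomial (Fin n) K)) :
    Set (Fin n →₀ ℕ) :=
  {a | (monomial a (1 : K) : MvPolynomial (Fin n) K) ∈ I ∧
    ∀ j : Fin n, a j ≠ 0 →
      (monomial (a - Finsupp.single j 1) (1 : K) : MvPolynomial (Fin n) K) ∉ I}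

/-- The restriction `u(A)` of an exponent vector: `u(A) = ∏_{j ∈ A} x_j ^ (a j)`. -/
def restrictExp {n : ℕ} (A : Finset (Fin n)) (a : Fin n →₀ ℕ) : Fin n →₀ ℕ :=
  Finsupp.filter (· ∈ A) a

/-- The ideal generated by `{u(A) : u ∈ G_min(I)}`; the eliminating simplicial complex
of `I` consists of the `A ⊆ [n]` for which this ideal is all of `S`. -/
noncomputable def elimIdeal {K : Type*} [Field K] {n : ℕ} (I : Ideal (MvPolynomial (Fin n) K))
    (A : Finset (Fin n)) : Ideal (MvPolynomial (Fin n) K) :=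
  Ideal.span ((fun a => (monomial (restrictExp A a) (1 : K) : MvPolynomial (Fin n) K)) ''
    minGens I)

/-!
Write `R` for the ideal generated by the products `∏_{i ∈ B} x_i` over all `B` containing the
support of some minimal generator of `J`; these are exactly the `B` with `elimIdeal J Bᶜ = ⊤`.
Every monomial of `J` lies above a minimal generator `u`, hence is divisible by
`∏_{i ∈ supp u} x_i`, so `J ⊆ R`; conversely a high power of `∏_{i ∈ B} x_i` is divisible by
`u`, so `R ⊆ √J`. Finally `R`, being generated by squarefree monomials, is radical.
-/

namespace MvPolynomial

variable {σ R : Type*} [CommRing R]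

/-- `X i ↦ 0` for `i ∈ s` is the identity modulo the ideal, so the ideal is its kernel. -/
theorem isPrime_span_X_image [IsDomain R] (s : Set σ) :
    (Ideal.span (X '' s : Set (MvPolynomial σ R))).IsPrime := by
  classical
  set I := Ideal.span (X '' s : Set (MvPolynomial σ R))
  let φ : MvPolynomial σ R →ₐ[R] MvPolynomial σ R := aeval fun i => if i ∈ s then 0 else X i
  have hφ : (Ideal.Quotient.mkₐ R I).comp φ = Ideal.Quotient.mkₐ R I := by
    refine algHom_ext fun i => ?_
    by_cases hi : i ∈ s
    · simpa [φ, hi] using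
        (Ideal.Quotient.eq_zero_iff_mem.2 (Ideal.subset_span (Set.mem_image_of_mem X hi))).symm
    · simp [φ, hi]
  have : I = RingHom.ker φ := by
    refine le_antisymm (Ideal.span_le.2 ?_) fun p hp => ?_
    · rintro _ ⟨i, hi, rfl⟩
      simp [φ, hi]
    · have := AlgHom.congr_fun hφ p
      rw [AlgHom.comp_apply, (RingHom.mem_ker).1 hp, map_zero] at this
      exact Ideal.Quotient.eq_zero_iff_mem.1 this.symm
  rw [this]
  exact RingHom.ker_isPrime _

theorem prod_X_eq_monomial (B : Finset σ) :
    ∏ i ∈ B, (X i : MvPolynomial σ R) = monomial (∑ i ∈ B, Finsupp.single i 1) 1 := by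
  rw [monomial_sum_one]; rfl

theorem sum_single_one_le_iff {B : Finset σ} {e : σ →₀ ℕ} :
    ∑ i ∈ B, Finsupp.single i 1 ≤ e ↔ B ⊆ e.support := by
  classical
  simp only [Finsupp.le_def, Finsupp.finsetSum_apply, Finsupp.single_apply, Finset.sum_ite_eq',
    Finset.subset_iff, Finsupp.mem_support_iff]
  refine ⟨fun h i hi => ?_, fun h i => ?_⟩
  · simpa [hi, Nat.one_le_iff_ne_zero] using h i
  · split_ifs with hi
    · exact Nat.one_le_iff_ne_zero.2 (h hi)
    · exact Nat.zero_le _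

theorem mem_ideal_span_prod_X_image {p : MvPolynomial σ R} {𝓑 : Set (Finset σ)} :
    p ∈ Ideal.span ((fun B => ∏ i ∈ B, X i) '' 𝓑) ↔ ∀ e ∈ p.support, ∃ B ∈ 𝓑, B ⊆ e.support := by
  simp_rw [prod_X_eq_monomial]
  rw [← Set.image_image (fun s => monomial s (1 : R)), mem_ideal_span_monomial_image]
  simp [sum_single_one_le_iff]

theorem monomial_mem_ideal_span_prod_X_image {a : σ →₀ ℕ} {c : R} (hc : c ≠ 0)
    {𝓑 : Set (Finset σ)} :
    monomial a c ∈ Ideal.span ((fun B => ∏ i ∈ B, X i) '' 𝓑) ↔ ∃ B ∈ 𝓑, B ⊆ a.support := by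
  classical
  rw [mem_ideal_span_prod_X_image, support_monomial, if_neg hc]
  simp

/-- If `p` is not in the ideal, some exponent `e` of `p` lies above no generator; the ideal is then
contained in the prime ideal generated by the variables outside `e.support`, which misses `p`. -/
theorem isRadical_span_prod_X_image [IsDomain R] (𝓑 : Set (Finset σ)) :
    (Ideal.span ((fun B => ∏ i ∈ B, (X i : MvPolynomial σ R)) '' 𝓑)).IsRadical := by
  rintro p ⟨k, hk⟩
  by_contra hp
  simp only [mem_ideal_span_prod_X_image, not_forall, not_exists, not_and] at hp
  obtain ⟨e, he, hnot⟩ := hp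
  set P := Ideal.span (X '' (↑e.support : Set σ)ᶜ : Set (MvPolynomial σ R))
  have hP : P.IsPrime := isPrime_span_X_image _
  have hle : Ideal.span ((fun B => ∏ i ∈ B, (X i : MvPolynomial σ R)) '' 𝓑) ≤ P := by
    refine Ideal.span_le.2 ?_
    rintro _ ⟨B, hB, rfl⟩
    obtain ⟨i, hiB, hie⟩ := Finset.not_subset.1 (hnot B hB)
    exact Ideal.mem_of_dvd _ (Finset.dvd_prod_of_mem _ hiB)
      (Ideal.subset_span ⟨i, by simpa using hie, rfl⟩)
  have hpP : p ∉ P := by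
    rw [mem_ideal_span_X_image]
    push Not
    exact ⟨e, he, fun i hi => by simpa using hi⟩
  exact hpP (hP.mem_of_pow_mem k (hle hk))

theorem prod_X_mem_radical_of_monomial_mem {I : Ideal (MvPolynomial σ R)} {m : σ →₀ ℕ}
    {B : Finset σ} (hm : monomial m 1 ∈ I) (hB : m.support ⊆ B) : ∏ i ∈ B, X i ∈ I.radical := by
  refine ⟨m.degree, I.mem_of_dvd ?_ hm⟩
  calc monomial m (1 : R) = ∏ i ∈ m.support, X i ^ m i := by
        rw [monomial_eq, C_1, one_mul, Finsupp.prod]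
    _ ∣ ∏ i ∈ m.support, X i ^ m.degree :=
        Finset.prod_dvd_prod_of_dvd _ _ fun i _ => pow_dvd_pow _ (m.le_degree i)
    _ ∣ ∏ i ∈ B, X i ^ m.degree := Finset.prod_dvd_prod_of_subset _ _ _ hB
    _ = (∏ i ∈ B, X i) ^ m.degree := Finset.prod_pow _ _ _

end MvPolynomial

section MinGens

variable {K : Type*} [Field K] {n : ℕ}

theorem exists_mem_minGens_le {I : Ideal (MvPolynomial (Fin n) K)} {a : Fin n →₀ ℕ}
    (ha : monomial a (1 : K) ∈ I) : ∃ m ∈ minGens I, m ≤ a := by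
  obtain ⟨m, ⟨hmI, hma⟩, hmin⟩ := wellFounded_lt.has_min
    {b : Fin n →₀ ℕ | monomial b (1 : K) ∈ I ∧ b ≤ a} ⟨a, ha, le_rfl⟩
  refine ⟨m, ⟨hmI, fun j hj hjI => hmin _ ⟨hjI, tsub_le_self.trans hma⟩ ?_⟩, hma⟩
  refine lt_of_le_of_ne tsub_le_self fun h => hj ?_
  have := DFunLike.congr_fun h j
  simp only [Finsupp.coe_tsub, Pi.sub_apply, Finsupp.single_eq_same] at this
  omega

theorem elimIdeal_eq_top_iff (I : Ideal (MvPolynomial (Fin n) K)) (A : Finset (Fin n)) :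
    elimIdeal I A = ⊤ ↔ ∃ m ∈ minGens I, Disjoint m.support A := by
  rw [elimIdeal, ← Set.image_image (fun s => monomial s (1 : K)), Ideal.eq_top_iff_one,
    one_def, mem_ideal_span_monomial_image]
  simp [restrictExp, Finsupp.filter_eq_zero_iff, Finset.disjoint_right]

end MinGens

/-- The radical of a monomial ideal `J` is the Stanley–Reisner ideal of the Alexander
dual of the eliminating simplicial complex of `J`: it is generated by the squarefree
monomials `∏_{i ∈ B} x_i` over all `B ⊆ [n]` such that the ideal generated by
`{u([n] ∖ B) : u ∈ G_min(J)}` is all of `S`. -/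
theorem radical_eq_stanleyReisner_alexanderDual {K : Type*} [Field K] {n : ℕ}
    (J : Ideal (MvPolynomial (Fin n) K)) (hmon : IsMonomialIdeal J) :
    J.radical =
      Ideal.span {m : MvPolynomial (Fin n) K |
        ∃ B : Finset (Fin n), elimIdeal J Bᶜ = ⊤ ∧ m = ∏ i ∈ B, X i} := by
  obtain ⟨G, hG⟩ := hmon
  set 𝓑 := {B : Finset (Fin n) | ∃ m ∈ minGens J, m.support ⊆ B}
  have hgens : {m : MvPolynomial (Fin n) K |
      ∃ B : Finset (Fin n), elimIdeal J Bᶜ = ⊤ ∧ m = ∏ i ∈ B, X i} =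
        (fun B => ∏ i ∈ B, X i) '' 𝓑 := by
    ext p
    simp [𝓑, elimIdeal_eq_top_iff, disjoint_compl_right_iff, eq_comm]
  rw [hgens]
  refine le_antisymm ((isRadical_span_prod_X_image 𝓑).radical_le_iff.2 ?_) ?_
  · rw [hG, Ideal.span_le]
    rintro _ ⟨g, hg, rfl⟩
    obtain ⟨m, hm, hmg⟩ :=
      exists_mem_minGens_le (hG ▸ Ideal.subset_span (Set.mem_image_of_mem _ hg))
    exact (monomial_mem_ideal_span_prod_X_image one_ne_zero).2
      ⟨m.support, ⟨m, hm, subset_rfl⟩, Finsupp.support_mono hmg⟩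
  · rw [Ideal.span_le]
    rintro _ ⟨B, ⟨m, hm, hmB⟩, rfl⟩
    exact prod_X_mem_radical_of_monomial_mem hm.1 hmB
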